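/- arXiv:2005.03316 — 2 statements merged into one kernel-verified Lean document; each statement's English description precedes it below -/
import Mathlib

section
/- Let G be a cyclic group of order n ≥ 4. Then the set {2, n−2, n−1} lies in L(G). -/
/-- A minimal zero-sum sequence (an atom): a nonempty multiset of group elements
whose sum is zero and which is not the union of two nonempty zero-sum sequences. -/
def IsMinZeroSumSeq {G : Type*} [AddCommGroup G] (S : Multiset G) : Prop :=
  S ≠ 0 ∧ S.sum = 0 ∧
    ¬ ∃ T₁ T₂ : Multiset G, T₁ ≠ 0 ∧ T₂ ≠ 0 ∧ T₁.sum = 0 ∧ T₂.sum = 0 ∧ S = T₁ + T₂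

/-- The set of lengths of a zero-sum sequence `B`: all `k` such that `B` is a
union of `k` atoms. -/
def lengthSet {G : Type*} [AddCommGroup G] (B : Multiset G) : Set ℕ :=
  {k | ∃ z : Multiset (Multiset G), Multiset.card z = k ∧
        (∀ A ∈ z, IsMinZeroSumSeq A) ∧ z.sum = B}

/-- The system of sets of lengths of the monoid of zero-sum sequences over `G`. -/
def systemOfLengths (G : Type*) [AddCommGroup G] : Set (Set ℕ) :=
  {L | ∃ B : Multiset G, B.sum = 0 ∧ lengthSet B = L}

/-- `hasDavenport G m` : the Davenport constant of `G` equals `m`, i.e. `m` is the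
maximal length of a minimal zero-sum sequence over `G`. -/
def hasDavenport (G : Type*) [AddCommGroup G] (m : ℕ) : Prop :=
  (∃ S : Multiset G, IsMinZeroSumSeq S ∧ Multiset.card S = m) ∧
    ∀ S : Multiset G, IsMinZeroSumSeq S → Multiset.card S ≤ m

set_option linter.unusedSectionVars false

namespace Stmt16Aux

open Multiset

variable {G : Type} [AddCommGroup G]

def PP (g : G) : Multiset G := {g, -g}
def DDD (g : G) : Multiset G := {g + g, -(g + g)}
def UU1 (n : ℕ) (g : G) : Multiset G := (g + g) ::ₘ replicate (n - 2) g
def UU2 (g : G) : Multiset G := {g + g, -g, -g}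
def VV1 (g : G) : Multiset G := {-(g + g), g, g}
def VV2 (n : ℕ) (g : G) : Multiset G := (-(g + g)) ::ₘ replicate (n - 2) (-g)
def BB (n : ℕ) (g : G) : Multiset G :=
  DDD g + replicate (n - 2) g + replicate (n - 2) (-g)

section Facts

variable (n : ℕ) (g : G) (hn : 4 ≤ n) (hk : ∀ k : ℤ, k • g = 0 ↔ (n : ℤ) ∣ k)

include hn hk

lemma smul_ne : ∀ k : ℤ, 0 < k → k < (n : ℤ) → k • g ≠ 0 := by
  intro k h1 h2 h0
  have hd := (hk k).1 h0
  have := Int.le_of_dvd h1 hd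
  omega

lemma hg0 : g ≠ 0 := by
  intro h
  refine smul_ne n g hn hk 1 one_pos (by exact_mod_cast by omega) ?_
  simpa using h

lemma hc0 : g + g ≠ 0 := by
  intro h
  refine smul_ne n g hn hk 2 two_pos (by exact_mod_cast by omega) ?_
  rw [two_zsmul]; exact h

lemma h3 : g + g + g ≠ 0 := by
  intro h
  refine smul_ne n g hn hk 3 (by norm_num) (by exact_mod_cast by omega) ?_
  rw [show (3:ℤ) = 2 + 1 by norm_num, add_zsmul, two_zsmul, one_zsmul]; exact h

lemma hga : g ≠ -g := by
  intro h
  rw [eq_neg_iff_add_eq_zero] at h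
  exact hc0 n g hn hk h

lemma hgc : g ≠ g + g := by
  intro h
  exact hg0 n g hn hk (by have := congrArg (· - g) h; simpa using this.symm)

lemma hgd : g ≠ -(g + g) := by
  intro h
  rw [eq_neg_iff_add_eq_zero, ← add_assoc] at h
  exact h3 n g hn hk h

lemma hac : -g ≠ g + g := by
  intro h
  have h2 : g + -g = 0 := add_neg_cancel g
  rw [h, ← add_assoc] at h2
  exact h3 n g hn hk h2

lemma had : -g ≠ -(g + g) := by
  intro h
  exact hgc n g hn hk (neg_inj.mp h)

lemma hd0 : -(g + g) ≠ 0 := fun h => hc0 n g hn hk (neg_eq_zero.mp h)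

lemma nsmul_ne : ∀ k : ℕ, 0 < k → k < n → k • g ≠ 0 := by
  intro k h1 h2 h0
  refine smul_ne n g hn hk k (by exact_mod_cast h1) (by exact_mod_cast h2) ?_
  rw [natCast_zsmul]; exact h0

lemma hng : n • g = 0 := by
  have := (hk n).2 dvd_rfl
  rwa [natCast_zsmul] at this

end Facts

/-- small atoms: card ≤ 3, all elements nonzero -/
lemma atom_small {S : Multiset G} (h0 : S ≠ 0) (hs : S.sum = 0) (hc : card S ≤ 3)
    (hz : ∀ x ∈ S, x ≠ 0) : IsMinZeroSumSeq S := by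
  refine ⟨h0, hs, ?_⟩
  rintro ⟨T₁, T₂, h1, h2, hs1, hs2, rfl⟩
  have c1 : 1 ≤ card T₁ := card_pos.mpr h1
  have c2 : 1 ≤ card T₂ := card_pos.mpr h2
  have hcc : card T₁ + card T₂ ≤ 3 := by simpa using hc
  have hor : card T₁ = 1 ∨ card T₂ = 1 := by omega
  rcases hor with h | h
  · obtain ⟨u, rfl⟩ := card_eq_one.mp h
    exact hz u (mem_add.mpr (Or.inl (mem_singleton_self u))) (by simpa using hs1)
  · obtain ⟨u, rfl⟩ := card_eq_one.mp h
    exact hz u (mem_add.mpr (Or.inr (mem_singleton_self u))) (by simpa using hs2)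

lemma atom_big {x y : G} {m : ℕ} (hxy : x ≠ y) (hsum : x + m • y = 0)
    (hy : ∀ k : ℕ, 0 < k → k ≤ m → k • y ≠ 0) :
    IsMinZeroSumSeq (x ::ₘ replicate m y) := by
  classical
  have key : ∀ T T' : Multiset G, T ≠ 0 → T.sum = 0 → T' ≠ 0 →
      x ::ₘ replicate m y = T + T' → count x T = 0 → False := by
    intro T T' hT hTs hT' he hcX
    have hTle : T ≤ x ::ₘ replicate m y := he ▸ le_add_right T T'
    have hall : ∀ u ∈ T, u = y := by
      intro u hu
      have hu2 : u ∈ x ::ₘ replicate m y := mem_of_le hTle hu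
      rcases mem_cons.mp hu2 with h | h
      · exact absurd (h ▸ hu) (count_eq_zero.mp hcX)
      · exact eq_of_mem_replicate h
    have hrep : T = replicate (card T) y := eq_replicate_card.mpr hall
    have h1 : 0 < card T := card_pos.mpr hT
    have h2 : card T ≤ m := by
      have hcards := congrArg card he
      simp only [card_cons, card_replicate, card_add] at hcards
      have := card_pos.mpr hT'
      omega
    refine hy _ h1 h2 ?_
    rw [hrep] at hTs
    simpa [sum_replicate] using hTs
  refine ⟨cons_ne_zero, by simpa [sum_replicate] using hsum, ?_⟩
  rintro ⟨T₁, T₂, h1, h2, hs1, hs2, he⟩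
  have hcount : count x T₁ + count x T₂ = 1 := by
    have h := congrArg (count x) he
    simp only [count_cons_self, count_add, count_replicate, if_neg (Ne.symm hxy)] at h
    omega
  have : count x T₁ = 0 ∨ count x T₂ = 0 := by omega
  rcases this with h | h
  · exact key T₁ T₂ h1 hs1 h2 he h
  · exact key T₂ T₁ h2 hs2 h1 (by rwa [add_comm] at he) h

section Atoms

variable (n : ℕ) (g : G) (hn : 4 ≤ n) (hk : ∀ k : ℤ, k • g = 0 ↔ (n : ℤ) ∣ k)

include hn hk

lemma atomP : IsMinZeroSumSeq (PP g) := by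
  refine atom_small (by simp [PP]) (by simp [PP]) (by simp [PP]) ?_
  intro x hx
  rcases show x = g ∨ x = -g by simpa [PP] using hx with h | h <;> rw [h]
  · exact hg0 n g hn hk
  · simpa using hg0 n g hn hk

lemma atomD : IsMinZeroSumSeq (DDD g) := by
  refine atom_small (by simp [DDD]) (by simp [DDD]) (by simp [DDD]) ?_
  intro x hx
  rcases show x = g + g ∨ x = -(g + g) by simpa [DDD] using hx with h | h <;> rw [h]
  · exact hc0 n g hn hk
  · exact hd0 n g hn hk

lemma atomU2 : IsMinZeroSumSeq (UU2 g) := by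
  refine atom_small (by simp [UU2]) (by simp [UU2]) (by simp [UU2]) ?_
  intro x hx
  rcases show x = g + g ∨ x = -g ∨ x = -g by simpa [UU2] using hx with h | h | h <;> rw [h]
  · exact hc0 n g hn hk
  · simpa using hg0 n g hn hk
  · simpa using hg0 n g hn hk

lemma atomV1 : IsMinZeroSumSeq (VV1 g) := by
  refine atom_small (by simp [VV1]) (by simp [VV1]) (by simp [VV1]) ?_
  intro x hx
  rcases show x = -(g + g) ∨ x = g ∨ x = g by simpa [VV1] using hx with h | h | h <;> rw [h]
  · exact hd0 n g hn hk
  · exact hg0 n g hn hk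
  · exact hg0 n g hn hk

lemma atomU1 : IsMinZeroSumSeq (UU1 n g) := by
  refine atom_big (Ne.symm (hgc n g hn hk)) ?_ ?_
  · have h2 : 2 + (n - 2) = n := by omega
    have h3 : (g + g) + (n - 2) • g = (2 + (n - 2)) • g := by
      rw [add_nsmul, two_nsmul]
    rw [h3, h2]; exact hng n g hn hk
  · intro k h1 h2
    exact nsmul_ne n g hn hk k h1 (by omega)

lemma atomV2 : IsMinZeroSumSeq (VV2 n g) := by
  refine atom_big (fun h => (hgc n g hn hk) (neg_inj.mp h).symm) ?_ ?_
  · have h2 : 2 + (n - 2) = n := by omega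
    have : -(g + g) + (n - 2) • (-g) = -(n • g) := by
      rw [neg_nsmul, ← neg_add, ← two_nsmul, ← add_nsmul, h2]
    rw [this, hng n g hn hk, neg_zero]
  · intro k h1 h2 h0
    rw [neg_nsmul, neg_eq_zero] at h0
    exact nsmul_ne n g hn hk k h1 (by omega) h0

end Atoms


lemma rep2 (a : G) : replicate 2 a = ({a, a} : Multiset G) := by
  rw [show (2:ℕ) = 1 + 1 from rfl, replicate_add, replicate_one, singleton_add]
  rfl

lemma int_cases {N v : ℤ} (hN : 4 ≤ N) (hd : N ∣ v) (h1 : -N ≤ v) (h2 : v ≤ N) :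
    v = -N ∨ v = 0 ∨ v = N := by
  obtain ⟨k, rfl⟩ := hd
  have hk : k = -1 ∨ k = 0 ∨ k = 1 := by
    rcases le_or_gt k (-2) with h | h
    · nlinarith
    · rcases le_or_gt 2 k with h' | h'
      · nlinarith
      · omega
  rcases hk with rfl | rfl | rfl
  · left; ring
  · right; left; ring
  · right; right; ring

section Classify

variable (n : ℕ) (g : G) (hn : 4 ≤ n) (hk : ∀ k : ℤ, k • g = 0 ↔ (n : ℤ) ∣ k)

include hn hk

lemma countD [DecidableEq G] (y : G) (h1 : y ≠ g + g) (h2 : y ≠ -(g + g)) : count y (DDD g) = 0 := by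
  rw [DDD, insert_eq_cons, count_cons, count_singleton, if_neg h2, if_neg h1]

lemma hDsum : (DDD g).sum = 0 := by
  simp [DDD, insert_eq_cons]

lemma hBg [DecidableEq G] : count g (BB n g) = n - 2 := by
  rw [BB, count_add, count_add,
    countD n g hn hk g (hgc n g hn hk) (hgd n g hn hk),
    count_replicate, if_pos rfl, count_replicate, if_neg (Ne.symm (hga n g hn hk))]
  omega

lemma hBa [DecidableEq G] : count (-g) (BB n g) = n - 2 := by
  rw [BB, count_add, count_add,
    countD n g hn hk (-g) (hac n g hn hk) (had n g hn hk),
    count_replicate, if_neg (hga n g hn hk), count_replicate, if_pos rfl]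
  omega

lemma classify {A : Multiset G} (hA : A ≤ BB n g) (hmin : IsMinZeroSumSeq A) :
    A = PP g ∨ A = DDD g ∨ A = UU1 n g ∨ A = UU2 g ∨ A = VV1 g ∨ A = VV2 n g := by
  classical
  obtain ⟨hA0, hAsum, hminsplit⟩ := hmin
  have Hgc := hgc n g hn hk
  have Hgd := hgd n g hn hk
  have Hac := hac n g hn hk
  have Had := had n g hn hk
  have Hga := hga n g hn hk
  set p := count g A with hp
  set q := count (-g) A with hq
  set X := A.filter (fun x => x = g + g ∨ x = -(g + g)) with hX
  -- membership in B
  have hmemB : ∀ y, y ∈ A → y = g ∨ y = -g ∨ y = g + g ∨ y = -(g + g) := by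
    intro y hy
    have : y ∈ BB n g := mem_of_le hA hy
    simp only [BB, DDD, mem_add, mem_replicate, insert_eq_cons, mem_cons, mem_singleton] at this
    tauto
  -- decomposition
  have hdec : A = replicate p g + replicate q (-g) + X := by
    ext y
    simp only [count_add, count_replicate, hX, count_filter]
    by_cases h1 : y = g
    · subst h1
      rw [if_pos rfl, if_neg (Ne.symm Hga), if_neg (by push_neg; exact ⟨Hgc, Hgd⟩)]
      omega
    · by_cases h2 : y = -g
      · subst h2
        rw [if_neg (Ne.symm h1), if_pos rfl, if_neg (by push_neg; exact ⟨Hac, Had⟩)]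
        omega
      · by_cases h3 : y = g + g ∨ y = -(g + g)
        · rw [if_neg (fun h => h1 h.symm), if_neg (fun h => h2 h.symm), if_pos h3]
          omega
        · rw [if_neg (fun h => h1 h.symm), if_neg (fun h => h2 h.symm), if_neg h3]
          have : y ∉ A := fun hy => by
            rcases hmemB y hy with h | h | h | h
            exacts [h1 h, h2 h, h3 (Or.inl h), h3 (Or.inr h)]
          simp [count_eq_zero.mpr this]
  -- X is below DDD
  have hXD : X ≤ DDD g := by
    have hle : X ≤ (BB n g).filter (fun x => x = g + g ∨ x = -(g + g)) :=
      filter_le_filter _ hA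
    have e1 : (replicate (n-2) g).filter (fun x => x = g + g ∨ x = -(g + g)) = 0 :=
      filter_eq_nil.mpr (fun a ha => by
        rw [eq_of_mem_replicate ha]; push_neg; exact ⟨Hgc, Hgd⟩)
    have e2 : (replicate (n-2) (-g)).filter (fun x => x = g + g ∨ x = -(g + g)) = 0 :=
      filter_eq_nil.mpr (fun a ha => by
        rw [eq_of_mem_replicate ha]; push_neg; exact ⟨Hac, Had⟩)
    have eD : (DDD g).filter (fun x => x = g + g ∨ x = -(g + g)) = DDD g :=
      filter_eq_self.mpr (fun a ha => by
        simpa [DDD, insert_eq_cons] using ha)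
    rw [BB, filter_add, filter_add, e1, e2, eD, add_zero, add_zero] at hle
    exact hle
  -- bounds
  have hpB : p ≤ n - 2 := (hBg n g hn hk) ▸ count_le_of_le g hA
  have hqB : q ≤ n - 2 := (hBa n g hn hk) ▸ count_le_of_le (-g) hA
  -- split lemma
  have hsplit : 1 ≤ p → 1 ≤ q → A = PP g := by
    intro hp1 hq1
    by_contra hne
    apply hminsplit
    have e1 : replicate p g = {g} + replicate (p-1) g := by
      rw [← replicate_one, ← replicate_add]
      congr 1
      omega
    have e2 : replicate q (-g) = {-g} + replicate (q-1) (-g) := by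
      rw [← replicate_one, ← replicate_add]
      congr 1
      omega
    have heq : A = PP g + (replicate (p-1) g + replicate (q-1) (-g) + X) := by
      rw [hdec, e1, e2, show PP g = {g} + {-g} from by rw [singleton_add]; rfl]
      abel
    refine ⟨PP g, _, by simp [PP], ?_, by simp [PP], ?_, heq⟩
    · intro h0
      have hc0' := congrArg card h0
      simp only [card_add, card_replicate, card_zero] at hc0'
      have hXe : X = 0 := card_eq_zero.mp (by omega)
      apply hne
      rw [hdec, show p = 1 by omega, show q = 1 by omega, hXe, replicate_one,
        replicate_one, add_zero, singleton_add]
      rfl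
    · have h := hAsum
      rw [heq, sum_add, show (PP g).sum = 0 by simp [PP], zero_add] at h
      exact h
  -- sum equation
  have hsum0 : (p:ℤ) • g - (q:ℤ) • g + X.sum = 0 := by
    have h := hAsum
    rw [hdec] at h
    simp only [sum_add, sum_replicate] at h
    rw [← h]
    module
  -- case analysis on X
  have hXsplit : X = 0 ∨ X = {g + g} ∨ X = {-(g + g)} ∨ X = DDD g := by
    have hcard : card X ≤ 2 := by
      have := card_le_card hXD
      simpa [DDD, insert_eq_cons] using this
    have h3 : card X = 0 ∨ card X = 1 ∨ card X = 2 := by omega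
    rcases h3 with h | h | h
    · exact Or.inl (card_eq_zero.mp h)
    · obtain ⟨u, hu⟩ := card_eq_one.mp h
      have : u ∈ DDD g := mem_of_le hXD (hu ▸ mem_singleton_self u)
      rcases show u = g + g ∨ u = -(g+g) by simpa [DDD, insert_eq_cons] using this with h' | h'
      · exact Or.inr (Or.inl (by rw [hu, h']))
      · exact Or.inr (Or.inr (Or.inl (by rw [hu, h'])))
    · refine Or.inr (Or.inr (Or.inr (eq_of_le_of_card_le hXD ?_)))
      simp [DDD, insert_eq_cons, h]
  have hcinA : ∀ u ∈ X, u ∈ A := fun u hu => mem_of_le (filter_le _ A) (hX ▸ hu)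
  rcases hXsplit with hXe | hXe | hXe | hXe
  · -- X = 0
    have h' := hsum0
    rw [hXe, sum_zero, add_zero] at h'
    have hdvd : (n:ℤ) ∣ ((p:ℤ) - q) := (hk _).1 (by rw [← h']; module)
    have hpq : p = q := by
      rcases int_cases (by exact_mod_cast hn) hdvd (by omega) (by omega) with h | h | h <;>
        omega
    rcases Nat.eq_zero_or_pos p with h0 | h0
    · exfalso
      apply hA0
      rw [hdec, hXe, h0, show q = 0 by omega]
      simp
    · exact Or.inl (hsplit h0 (hpq ▸ h0))
  · -- X = {g+g}
    have h' := hsum0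
    rw [hXe, sum_singleton] at h'
    have hdvd : (n:ℤ) ∣ ((p:ℤ) - q + 2) := (hk _).1 (by rw [← h']; module)
    have hcA : g + g ∈ A := hcinA _ (by rw [hXe]; exact mem_singleton_self _)
    rcases int_cases (by exact_mod_cast hn) hdvd (by omega) (by omega) with h | h | h
    · omega
    · -- q = p + 2
      rcases Nat.eq_zero_or_pos p with h0 | h0
      · right; right; right; left
        rw [hdec, hXe, h0, show q = 2 by omega, rep2]
        show 0 + ({-g, -g} : Multiset G) + {g+g} = UU2 g
        rw [zero_add, add_comm, singleton_add]
        rfl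
      · exfalso
        have hAP := hsplit h0 (by omega)
        rw [hAP] at hcA
        rcases show g + g = g ∨ g + g = -g by simpa [PP, insert_eq_cons] using hcA with h' | h'
        exacts [Hgc h'.symm, Hac h'.symm]
    · -- p = n - 2, q = 0
      right; right; left
      rw [hdec, hXe, show q = 0 by omega, show p = n - 2 by omega]
      show replicate (n-2) g + replicate 0 (-g) + {g+g} = UU1 n g
      rw [replicate_zero, add_zero, add_comm, singleton_add]
      rfl
  · -- X = {-(g+g)}
    have h' := hsum0
    rw [hXe, sum_singleton] at h'
    have hdvd : (n:ℤ) ∣ ((p:ℤ) - q - 2) := (hk _).1 (by rw [← h']; module)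
    have hcA : -(g + g) ∈ A := hcinA _ (by rw [hXe]; exact mem_singleton_self _)
    rcases int_cases (by exact_mod_cast hn) hdvd (by omega) (by omega) with h | h | h
    · -- q = n-2, p = 0
      right; right; right; right; right
      rw [hdec, hXe, show p = 0 by omega, show q = n - 2 by omega]
      show replicate 0 g + replicate (n-2) (-g) + {-(g+g)} = VV2 n g
      rw [replicate_zero, zero_add, add_comm, singleton_add]
      rfl
    · -- p = q + 2
      rcases Nat.eq_zero_or_pos q with h0 | h0
      · right; right; right; right; left
        rw [hdec, hXe, h0, show p = 2 by omega, rep2]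
        show ({g, g} : Multiset G) + 0 + {-(g+g)} = VV1 g
        rw [add_zero, add_comm, singleton_add]
        rfl
      · exfalso
        have hAP := hsplit (by omega) h0
        rw [hAP] at hcA
        rcases show -(g + g) = g ∨ -(g + g) = -g by simpa [PP, insert_eq_cons] using hcA
          with h' | h'
        exacts [Hgd h'.symm, Had h'.symm]
    · omega
  · -- X = DDD g
    have h' := hsum0
    rw [hXe, hDsum n g hn hk, add_zero] at h'
    have hdvd : (n:ℤ) ∣ ((p:ℤ) - q) := (hk _).1 (by rw [← h']; module)
    have hcA : g + g ∈ A := hcinA _ (by rw [hXe]; simp [DDD, insert_eq_cons])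
    have hpq : p = q := by
      rcases int_cases (by exact_mod_cast hn) hdvd (by omega) (by omega) with h | h | h <;>
        omega
    rcases Nat.eq_zero_or_pos p with h0 | h0
    · right; left
      rw [hdec, hXe, h0, show q = 0 by omega]
      simp
    · exfalso
      have hAP := hsplit h0 (hpq ▸ h0)
      rw [hAP] at hcA
      rcases show g + g = g ∨ g + g = -g by simpa [PP, insert_eq_cons] using hcA with h' | h'
      exacts [Hgc h'.symm, Hac h'.symm]

end Classify

section Forward

variable [DecidableEq G] (n : ℕ) (g : G) (hn : 4 ≤ n) (hk : ∀ k : ℤ, k • g = 0 ↔ (n : ℤ) ∣ k)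

/-- number of "double" elements in a multiset -/
def FF (g : G) (S : Multiset G) : ℕ :=
  card (S.filter (fun x => x = g + g ∨ x = -(g + g)))

lemma FF_add (S T : Multiset G) : FF g (S + T) = FF g S + FF g T := by
  unfold FF; rw [filter_add, card_add]

lemma FF_sum : ∀ w : Multiset (Multiset G), FF g w.sum = (w.map (FF g)).sum := by
  intro w
  induction w using Multiset.induction_on with
  | empty => simp [FF]
  | cons a s ih => simp [sum_cons, FF_add, ih]

include hn hk

lemma filter_rep_g (m : ℕ) :
    (replicate m g).filter (fun x => x = g + g ∨ x = -(g + g)) = 0 :=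
  filter_eq_nil.mpr (fun a ha => by
    rw [eq_of_mem_replicate ha]; push_neg
    exact ⟨hgc n g hn hk, hgd n g hn hk⟩)

lemma filter_rep_a (m : ℕ) :
    (replicate m (-g)).filter (fun x => x = g + g ∨ x = -(g + g)) = 0 :=
  filter_eq_nil.mpr (fun a ha => by
    rw [eq_of_mem_replicate ha]; push_neg
    exact ⟨hac n g hn hk, had n g hn hk⟩)

lemma filter_D :
    (DDD g).filter (fun x => x = g + g ∨ x = -(g + g)) = DDD g :=
  filter_eq_self.mpr (fun a ha => by
    simpa [DDD, insert_eq_cons] using ha)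

lemma FF_P : FF g (PP g) = 0 := by
  unfold FF
  rw [filter_eq_nil.mpr, card_zero]
  intro a ha
  rcases show a = g ∨ a = -g by simpa [PP, insert_eq_cons] using ha with h | h <;>
      rw [h] <;> push_neg
  · exact ⟨hgc n g hn hk, hgd n g hn hk⟩
  · exact ⟨hac n g hn hk, had n g hn hk⟩

lemma FF_D : FF g (DDD g) = 2 := by
  unfold FF
  rw [filter_D n g hn hk]
  simp [DDD, insert_eq_cons]

lemma FF_U1 : FF g (UU1 n g) = 1 := by
  unfold FF
  rw [UU1, filter_cons, if_pos (show (g+g) = g + g ∨ (g+g) = -(g+g) from Or.inl rfl),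
    filter_rep_g n g hn hk]
  simp

lemma FF_V2 : FF g (VV2 n g) = 1 := by
  unfold FF
  rw [VV2, filter_cons, if_pos (show -(g+g) = g + g ∨ -(g+g) = -(g+g) from Or.inr rfl),
    filter_rep_a n g hn hk]
  simp

lemma FF_U2 : FF g (UU2 g) = 1 := by
  unfold FF
  have e : ({-g, -g} : Multiset G) = replicate 2 (-g) := (rep2 (-g)).symm
  rw [show UU2 g = (g+g) ::ₘ {-g, -g} from rfl, filter_cons,
    if_pos (show (g+g) = g + g ∨ (g+g) = -(g+g) from Or.inl rfl), e,
    filter_rep_a n g hn hk]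
  simp

lemma FF_V1 : FF g (VV1 g) = 1 := by
  unfold FF
  have e : ({g, g} : Multiset G) = replicate 2 g := (rep2 g).symm
  rw [show VV1 g = -(g+g) ::ₘ {g, g} from rfl, filter_cons,
    if_pos (show -(g+g) = g + g ∨ -(g+g) = -(g+g) from Or.inr rfl), e,
    filter_rep_g n g hn hk]
  simp

lemma FF_B : FF g (BB n g) = 2 := by
  unfold FF
  rw [BB, filter_add, filter_add, filter_D n g hn hk, filter_rep_g n g hn hk,
    filter_rep_a n g hn hk, add_zero, add_zero]
  simp [DDD, insert_eq_cons]

lemma cPg : count g (PP g) = 1 := by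
  rw [PP, insert_eq_cons, count_cons, count_singleton,
    if_neg (hga n g hn hk), if_pos rfl]

lemma cPa : count (-g) (PP g) = 1 := by
  rw [PP, insert_eq_cons, count_cons, count_singleton,
    if_pos rfl, if_neg (Ne.symm (hga n g hn hk))]

lemma cU1g : count g (UU1 n g) = n - 2 := by
  rw [UU1, count_cons, count_replicate, if_neg (hgc n g hn hk), if_pos rfl]
  omega

lemma cU1a : count (-g) (UU1 n g) = 0 := by
  rw [UU1, count_cons, count_replicate, if_neg (hac n g hn hk),
    if_neg (hga n g hn hk)]

lemma cU2g : count g (UU2 g) = 0 := by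
  rw [UU2, insert_eq_cons, insert_eq_cons, count_cons, count_cons, count_singleton,
    if_neg (hgc n g hn hk), if_neg (hga n g hn hk)]

lemma cU2a : count (-g) (UU2 g) = 2 := by
  rw [UU2, insert_eq_cons, insert_eq_cons, count_cons, count_cons, count_singleton,
    if_neg (hac n g hn hk), if_pos rfl]

lemma cV1g : count g (VV1 g) = 2 := by
  rw [VV1, insert_eq_cons, insert_eq_cons, count_cons, count_cons, count_singleton,
    if_neg (hgd n g hn hk), if_pos rfl]

lemma cV1a : count (-g) (VV1 g) = 0 := by
  rw [VV1, insert_eq_cons, insert_eq_cons, count_cons, count_cons, count_singleton,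
    if_neg (had n g hn hk), if_neg (Ne.symm (hga n g hn hk))]

lemma cV2g : count g (VV2 n g) = 0 := by
  rw [VV2, count_cons, count_replicate, if_neg (hgd n g hn hk),
    if_neg (Ne.symm (hga n g hn hk))]

lemma cV2a : count (-g) (VV2 n g) = n - 2 := by
  rw [VV2, count_cons, count_replicate, if_neg (had n g hn hk), if_pos rfl]
  omega

lemma forward {z : Multiset (Multiset G)} (hz : ∀ A ∈ z, IsMinZeroSumSeq A)
    (hsum : z.sum = BB n g) : card z = 2 ∨ card z = n - 2 ∨ card z = n - 1 := by
  have htot : (z.map (FF g)).sum = 2 := by rw [← FF_sum, hsum, FF_B n g hn hk]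
  have hle : ∀ A ∈ z, A ≤ BB n g := by
    intro A hA
    obtain ⟨t, rfl⟩ := exists_cons_of_mem hA
    rw [sum_cons] at hsum
    exact hsum ▸ le_add_right A t.sum
  have hcls : ∀ A ∈ z,
      A = PP g ∨ A = DDD g ∨ A = UU1 n g ∨ A = UU2 g ∨ A = VV1 g ∨ A = VV2 n g :=
    fun A hA => classify n g hn hk (hle A hA) (hz A hA)
  have hPonly : ∀ A, (A = PP g ∨ A = DDD g ∨ A = UU1 n g ∨ A = UU2 g ∨ A = VV1 g ∨
      A = VV2 n g) → FF g A = 0 → A = PP g := by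
    intro A hsh hF0
    rcases hsh with h|h|h|h|h|h
    · exact h
    · rw [h, FF_D n g hn hk] at hF0; omega
    · rw [h, FF_U1 n g hn hk] at hF0; omega
    · rw [h, FF_U2 n g hn hk] at hF0; omega
    · rw [h, FF_V1 n g hn hk] at hF0; omega
    · rw [h, FF_V2 n g hn hk] at hF0; omega
  have hPsum : ∀ w : Multiset (Multiset G), (∀ A ∈ w, A = PP g) →
      count g w.sum = card w ∧ count (-g) w.sum = card w := by
    intro w hw
    induction w using Multiset.induction_on with
    | empty => simp
    | cons a s ih =>
      have ha := hw a (mem_cons_self a s)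
      obtain ⟨ih1, ih2⟩ := ih (fun A hA => hw A (mem_cons_of_mem hA))
      subst ha
      constructor
      · rw [sum_cons, count_add, cPg n g hn hk, ih1, card_cons]; omega
      · rw [sum_cons, count_add, cPa n g hn hk, ih2, card_cons]; omega
  by_cases hD : DDD g ∈ z
  · right; right
    obtain ⟨z', rfl⟩ := exists_cons_of_mem hD
    have hz'0 : (z'.map (FF g)).sum = 0 := by
      rw [map_cons, sum_cons, FF_D n g hn hk] at htot; omega
    have hall : ∀ A ∈ z', A = PP g := fun A hA =>
      hPonly A (hcls A (mem_cons_of_mem hA))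
        (Multiset.sum_eq_zero_iff.mp hz'0 _ (mem_map_of_mem (FF g) hA))
    have hcg : count g (z'.sum) = card z' := (hPsum z' hall).1
    have hgB := congrArg (count g) hsum
    rw [sum_cons, count_add, countD n g hn hk g (hgc n g hn hk) (hgd n g hn hk),
      hcg, hBg n g hn hk] at hgB
    rw [card_cons]
    omega
  · have hex : ∀ w : Multiset (Multiset G), (w.map (FF g)).sum ≠ 0 →
        ∃ A ∈ w, FF g A ≠ 0 := by
      intro w hw
      by_contra hno
      push_neg at hno
      exact hw (Multiset.sum_eq_zero (fun x hx => by
        obtain ⟨A, hA, rfl⟩ := mem_map.mp hx; exact hno A hA))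
    obtain ⟨A₀, hA₀, hF₀⟩ := hex z (by rw [htot]; norm_num)
    obtain ⟨z₀, rfl⟩ := exists_cons_of_mem hA₀
    have hA₀shape : A₀ = UU1 n g ∨ A₀ = UU2 g ∨ A₀ = VV1 g ∨ A₀ = VV2 n g := by
      rcases hcls A₀ (mem_cons_self _ _) with h|h|h|h|h|h
      · rw [h, FF_P n g hn hk] at hF₀; omega
      · exact absurd (h ▸ mem_cons_self A₀ z₀) hD
      · exact Or.inl h
      · exact Or.inr (Or.inl h)
      · exact Or.inr (Or.inr (Or.inl h))
      · exact Or.inr (Or.inr (Or.inr h))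
    have hF₀1 : FF g A₀ = 1 := by
      rcases hA₀shape with h|h|h|h <;> rw [h]
      exacts [FF_U1 n g hn hk, FF_U2 n g hn hk, FF_V1 n g hn hk, FF_V2 n g hn hk]
    have hz₀tot : (z₀.map (FF g)).sum = 1 := by
      rw [map_cons, sum_cons, hF₀1] at htot; omega
    obtain ⟨A₁, hA₁, hF₁⟩ := hex z₀ (by rw [hz₀tot]; norm_num)
    obtain ⟨z₁, rfl⟩ := exists_cons_of_mem hA₁
    have hA₁mem : A₁ ∈ A₀ ::ₘ A₁ ::ₘ z₁ := mem_cons_of_mem (mem_cons_self _ _)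
    have hA₁shape : A₁ = UU1 n g ∨ A₁ = UU2 g ∨ A₁ = VV1 g ∨ A₁ = VV2 n g := by
      rcases hcls A₁ hA₁mem with h|h|h|h|h|h
      · rw [h, FF_P n g hn hk] at hF₁; omega
      · exact absurd (h ▸ hA₁mem) hD
      · exact Or.inl h
      · exact Or.inr (Or.inl h)
      · exact Or.inr (Or.inr (Or.inl h))
      · exact Or.inr (Or.inr (Or.inr h))
    have hF₁1 : FF g A₁ = 1 := by
      rcases hA₁shape with h|h|h|h <;> rw [h]
      exacts [FF_U1 n g hn hk, FF_U2 n g hn hk, FF_V1 n g hn hk, FF_V2 n g hn hk]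
    have hz₁tot : (z₁.map (FF g)).sum = 0 := by
      rw [map_cons, sum_cons, hF₁1] at hz₀tot; omega
    have hall : ∀ A ∈ z₁, A = PP g := fun A hA =>
      hPonly A (hcls A (mem_cons_of_mem (mem_cons_of_mem hA)))
        (Multiset.sum_eq_zero_iff.mp hz₁tot _ (mem_map_of_mem (FF g) hA))
    obtain ⟨hc1, hc2⟩ := hPsum z₁ hall
    have hgB := congrArg (count g) hsum
    have haB := congrArg (count (-g)) hsum
    rw [sum_cons, sum_cons, count_add, count_add, hc1, hBg n g hn hk] at hgB
    rw [sum_cons, sum_cons, count_add, count_add, hc2, hBa n g hn hk] at haB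
    rw [card_cons, card_cons]
    rcases hA₀shape with h0|h0|h0|h0 <;> rcases hA₁shape with h1|h1|h1|h1 <;>
        rw [h0, h1] at hgB haB <;>
        simp only [cU1g n g hn hk, cU1a n g hn hk, cU2g n g hn hk, cU2a n g hn hk,
          cV1g n g hn hk, cV1a n g hn hk, cV2g n g hn hk, cV2a n g hn hk] at hgB haB <;>
      omega

end Forward

section Backward

variable (n : ℕ) (g : G) (hn : 4 ≤ n) (hk : ∀ k : ℤ, k • g = 0 ↔ (n : ℤ) ∣ k)

lemma repPP : ∀ m : ℕ, (replicate m (PP g)).sum = replicate m g + replicate m (-g) := by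
  intro m
  induction m with
  | zero => simp
  | succ k ih =>
    rw [replicate_succ, sum_cons, ih, replicate_succ, replicate_succ]
    simp only [PP, insert_eq_cons, ← singleton_add]
    abel

include hn hk

lemma hBsum : (BB n g).sum = 0 := by
  rw [BB, sum_add, sum_add, hDsum n g hn hk, sum_replicate, sum_replicate, zero_add]
  rw [neg_nsmul, add_neg_cancel]

lemma hz1sum : UU1 n g + VV2 n g = BB n g := by
  rw [UU1, VV2, BB, DDD, insert_eq_cons]
  simp only [← singleton_add]
  abel

lemma hz2sum : UU2 g + (VV1 g + (replicate (n - 4) (PP g)).sum) = BB n g := by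
  have hng2 : replicate (n-2) g = replicate 1 g + replicate 1 g + replicate (n-4) g := by
    rw [← replicate_add, ← replicate_add]
    congr 1
    omega
  have hna2 : replicate (n-2) (-g) =
      replicate 1 (-g) + replicate 1 (-g) + replicate (n-4) (-g) := by
    rw [← replicate_add, ← replicate_add]
    congr 1
    omega
  rw [repPP, BB, DDD, hng2, hna2]
  simp only [UU2, VV1, insert_eq_cons, replicate_one, ← singleton_add]
  abel

lemma hz3sum : DDD g + (replicate (n - 2) (PP g)).sum = BB n g := by
  rw [repPP, BB]
  abel

lemma two_mem : 2 ∈ lengthSet (BB n g) := by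
  refine ⟨UU1 n g ::ₘ {VV2 n g}, by simp, ?_, ?_⟩
  · intro A hA
    rcases show A = UU1 n g ∨ A = VV2 n g by simpa using hA with h | h <;> rw [h]
    · exact atomU1 n g hn hk
    · exact atomV2 n g hn hk
  · rw [sum_cons, sum_singleton, hz1sum n g hn hk]

lemma nm2_mem : n - 2 ∈ lengthSet (BB n g) := by
  refine ⟨UU2 g ::ₘ VV1 g ::ₘ replicate (n - 4) (PP g), ?_, ?_, ?_⟩
  · simp only [card_cons, card_replicate]
    omega
  · intro A hA
    rcases show A = UU2 g ∨ A = VV1 g ∨ A ∈ replicate (n-4) (PP g) by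
        simpa using hA with h | h | h
    · rw [h]; exact atomU2 n g hn hk
    · rw [h]; exact atomV1 n g hn hk
    · rw [eq_of_mem_replicate h]; exact atomP n g hn hk
  · rw [sum_cons, sum_cons, hz2sum n g hn hk]

lemma nm1_mem : n - 1 ∈ lengthSet (BB n g) := by
  refine ⟨DDD g ::ₘ replicate (n - 2) (PP g), ?_, ?_, ?_⟩
  · simp only [card_cons, card_replicate]
    omega
  · intro A hA
    rcases show A = DDD g ∨ A ∈ replicate (n-2) (PP g) by simpa using hA with h | h
    · rw [h]; exact atomD n g hn hk
    · rw [eq_of_mem_replicate h]; exact atomP n g hn hk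
  · rw [sum_cons, hz3sum n g hn hk]

lemma lengthSet_BB : lengthSet (BB n g) = {2, n - 2, n - 1} := by
  classical
  ext k
  simp only [Set.mem_insert_iff, Set.mem_singleton_iff]
  constructor
  · rintro ⟨z, rfl, hz, hsum⟩
    exact forward n g hn hk hz hsum
  · rintro (rfl | rfl | rfl)
    · exact two_mem n g hn hk
    · exact nm2_mem n g hn hk
    · exact nm1_mem n g hn hk

end Backward

end Stmt16Aux

/-- Lemma 4.2: for a cyclic group `G` of order `n ≥ 4`, `{2, n-2, n-1} ∈ L(G)`. -/
theorem stmt16 (n : ℕ) (hn : 4 ≤ n) (G : Type) [AddCommGroup G] [Fintype G]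
    (hcyc : IsAddCyclic G) (hcard : Fintype.card G = n) :
    ({2, n - 2, n - 1} : Set ℕ) ∈ systemOfLengths G := by
  classical
  obtain ⟨g, hgen⟩ := hcyc.exists_generator
  have hord : addOrderOf g = n := by
    rw [addOrderOf_eq_card_of_forall_mem_zmultiples hgen, Nat.card_eq_fintype_card, hcard]
  have hk : ∀ k : ℤ, k • g = 0 ↔ (n : ℤ) ∣ k := by
    intro k
    rw [← addOrderOf_dvd_iff_zsmul_eq_zero, hord]
  exact ⟨Stmt16Aux.BB n g, Stmt16Aux.hBsum n g hn hk, Stmt16Aux.lengthSet_BB n g hn hk⟩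
end

section
/- Let G = C_2^3 ⊕ C_4 and let U be an atom (minimal zero-sum sequence) over G of length |U| = D(G) = 7. Then 3 ∉ L(U·(−U)), where U·(−U) denotes the multiset union of U with the multiset −U of the inverses of the elements of U. -/
namespace Multiset

variable {α : Type*}

theorem exists_refinement_of_add_eq_add {A B X Y : Multiset α} (h : A + B = X + Y) :
    ∃ S T S' T' : Multiset α, X = S + S' ∧ Y = T + T' ∧ A = S + T ∧ B = S' + T' := by
  classical
  have hA : A = A ∩ X + (A - X) := by rw [add_comm, sub_add_inter]
  have hAX : A - X ≤ Y := tsub_le_iff_left.mpr (h ▸ le_self_add)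
  refine ⟨A ∩ X, A - X, X - A ∩ X, Y - (A - X), (add_tsub_cancel_of_le inter_le_right).symm,
    (add_tsub_cancel_of_le hAX).symm, hA, ?_⟩
  apply add_left_cancel (a := A)
  nth_rw 2 [hA]
  rw [h, add_add_add_comm, add_tsub_cancel_of_le inter_le_right, add_tsub_cancel_of_le hAX]

theorem exists_refinement_of_add_add_eq_add {A₁ A₂ A₃ X Y : Multiset α}
    (h : A₁ + A₂ + A₃ = X + Y) :
    ∃ S₁ S₂ S₃ T₁ T₂ T₃ : Multiset α, X = S₁ + S₂ + S₃ ∧ Y = T₁ + T₂ + T₃ ∧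
      A₁ = S₁ + T₁ ∧ A₂ = S₂ + T₂ ∧ A₃ = S₃ + T₃ := by
  obtain ⟨S, T, S₃, T₃, rfl, rfl, h₁₂, rfl⟩ := exists_refinement_of_add_eq_add h
  obtain ⟨S₁, T₁, S₂, T₂, rfl, rfl, rfl, rfl⟩ := exists_refinement_of_add_eq_add h₁₂
  exact ⟨S₁, S₂, S₃, T₁, T₂, T₃, rfl, rfl, rfl, rfl, rfl⟩

theorem map_neg_map_neg {G : Type*} [InvolutiveNeg G] (X : Multiset G) :
    (X.map fun g => -g).map (fun g => -g) = X := by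
  simp [map_map]

theorem exists_split_of_add_add_eq_add_map_neg {G : Type*} [InvolutiveNeg G]
    {A₁ A₂ A₃ U : Multiset G} (h : A₁ + A₂ + A₃ = U + U.map fun g => -g) :
    ∃ S₁ S₂ S₃ T₁ T₂ T₃ : Multiset G, U = S₁ + S₂ + S₃ ∧ U = T₁ + T₂ + T₃ ∧
      A₁ = S₁ + T₁.map (fun g => -g) ∧ A₂ = S₂ + T₂.map (fun g => -g) ∧
      A₃ = S₃ + T₃.map (fun g => -g) := by
  obtain ⟨S₁, S₂, S₃, N₁, N₂, N₃, hS, hN, rfl, rfl, rfl⟩ :=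
    exists_refinement_of_add_add_eq_add h
  refine ⟨S₁, S₂, S₃, N₁.map (fun g => -g), N₂.map (fun g => -g), N₃.map (fun g => -g), hS,
    ?_, by rw [map_neg_map_neg], by rw [map_neg_map_neg], by rw [map_neg_map_neg]⟩
  rw [← map_neg_map_neg U, hN, map_add, map_add]

end Multiset

theorem Finset.sum_add_sum_eq_sum_symmDiff_add_two_nsmul {ι M : Type*} [AddCommMonoid M]
    [DecidableEq ι] (s t : Finset ι) (f : ι → M) :
    ∑ i ∈ s, f i + ∑ i ∈ t, f i = ∑ i ∈ symmDiff s t, f i + 2 • ∑ i ∈ s ∩ t, f i := by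
  rw [← Finset.sum_union_inter, symmDiff_eq_sup_sdiff_inf, Finset.sup_eq_union,
    Finset.inf_eq_inter, two_nsmul, ← add_assoc, Finset.sum_sdiff Finset.inter_subset_union]

/-- Two distinct subsequences with equal image sums exist by pigeonhole; as `H` has exponent two,
their symmetric difference works. -/
theorem exists_le_sum_eq_zero_of_card_lt {G H : Type*} [AddCommMonoid G] [AddCommGroup H]
    [Fintype H] (hH : ∀ h : H, h + h = 0) (φ : G →+ H) (S : Multiset G)
    (hS : Fintype.card H < 2 ^ Multiset.card S) :
    ∃ X ≤ S, X ≠ 0 ∧ φ X.sum = 0 := by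
  classical
  let subseq : Finset S → Multiset G := fun I => I.val.map (fun x : S => (x : G))
  have hsubseq_le : ∀ I, subseq I ≤ S := fun I => by
    simpa only [subseq, Multiset.map_univ_coe] using
      Multiset.map_le_map (f := fun x : S => (x : G)) (Finset.val_le_iff.mpr I.subset_univ)
  have hcard : Fintype.card H < Fintype.card (Finset S) := by
    rwa [Fintype.card_finset, Multiset.card_coe]
  obtain ⟨I, J, hIJ, hφ⟩ :=
    Fintype.exists_ne_map_eq_of_card_lt (fun I : Finset S => ∑ x ∈ I, φ x) hcard
  refine ⟨subseq (symmDiff I J), hsubseq_le _, ?_, ?_⟩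
  · simpa [subseq, symmDiff_eq_bot] using hIJ
  · have := Finset.sum_add_sum_eq_sum_symmDiff_add_two_nsmul I J (fun x => φ x)
    rw [hφ, two_nsmul, hH, hH, add_zero] at this
    rw [map_multiset_sum, Multiset.map_map]
    exact this.symm

namespace IsMinZeroSumSeq

variable {G : Type*} [AddCommGroup G] {A B C S T U V X : Multiset G}

theorem eq_of_le_of_sum_eq_zero (hA : IsMinZeroSumSeq A) (hX : X ≤ A) (hX0 : X ≠ 0)
    (hXs : X.sum = 0) : X = A := by
  classical
  by_contra hXA
  refine hA.2.2 ⟨X, A - X, hX0, fun h => hXA ?_, hXs, ?_, (add_tsub_cancel_of_le hX).symm⟩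
  · exact le_antisymm hX (tsub_eq_zero_iff_le.mp h)
  · have hsum := congrArg Multiset.sum (add_tsub_cancel_of_le hX)
    rwa [Multiset.sum_add, hXs, zero_add, hA.2.1] at hsum

theorem sum_ne_zero (hU : IsMinZeroSumSeq U) (hX : X ≤ U) (hX0 : X ≠ 0) (hXU : X ≠ U) :
    X.sum ≠ 0 :=
  fun hXs => hXU (hU.eq_of_le_of_sum_eq_zero hX hX0 hXs)

theorem map_neg (hA : IsMinZeroSumSeq A) : IsMinZeroSumSeq (A.map fun g => -g) := by
  refine ⟨by simpa using hA.1, by simp [Multiset.sum_map_neg', hA.2.1], ?_⟩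
  rintro ⟨T₁, T₂, h₁, h₂, hs₁, hs₂, hA'⟩
  refine hA.2.2 ⟨T₁.map (fun g => -g), T₂.map (fun g => -g), by simpa using h₁, by simpa using h₂,
    by simp [Multiset.sum_map_neg', hs₁], by simp [Multiset.sum_map_neg', hs₂], ?_⟩
  rw [← Multiset.map_add, ← hA', Multiset.map_neg_map_neg]

theorem card_eq_two_or_add_le (hA : IsMinZeroSumSeq A) (hAST : A = S + T.map fun g => -g)
    (hS : S ≤ U) (hT : T ≤ U) : Multiset.card A = 2 ∨ S + T ≤ U := by
  classical
  by_cases hST : ∃ g ∈ S, g ∈ T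
  · obtain ⟨g, hgS, hgT⟩ := hST
    have hpair : {g} + {-g} ≤ A := hAST ▸ add_le_add (Multiset.singleton_le.mpr hgS)
      (Multiset.singleton_le.mpr (Multiset.mem_map_of_mem _ hgT))
    left
    rw [← hA.eq_of_le_of_sum_eq_zero hpair (by simp) (by simp)]
    rfl
  · push Not at hST
    right
    rw [Multiset.add_eq_union_iff_disjoint.mpr (Multiset.disjoint_left.mpr (hST _))]
    exact Multiset.union_le hS hT

theorem add_ne_of_add_add_eq (hA : IsMinZeroSumSeq A) (hB : IsMinZeroSumSeq B)
    (hC : IsMinZeroSumSeq C) (hsum : A + B + C = U + U.map fun g => -g)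
    (hAST : A = S + T.map fun g => -g) : S + T ≠ U := by
  rintro rfl
  have hBC : B + C = A.map fun g => -g := by
    apply add_left_cancel (a := A)
    rw [← add_assoc, hsum, hAST, Multiset.map_add, Multiset.map_add, Multiset.map_neg_map_neg]
    abel
  exact hA.map_neg.2.2 ⟨B, C, hB.1, hC.1, hB.2.1, hC.2.1, hBC.symm⟩

section KernelOfOrderTwo

variable {H : Type*} [AddCommGroup H] [Fintype H] (hH : ∀ h : H, h + h = 0) (φ : G →+ H)
  (e : G) (hker : ∀ g, φ g = 0 → g = 0 ∨ g = e)
include hH hker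

theorem two_pow_card_le (hU : IsMinZeroSumSeq U) (hV : V ≤ U) (hVU : V ≠ U) (hVe : V.sum = e) :
    2 ^ Multiset.card V ≤ 2 * Fintype.card H := by
  classical
  rcases Multiset.empty_or_exists_mem V with rfl | ⟨a, ha⟩
  · have := Fintype.card_pos (α := H)
    simp only [Multiset.card_zero, pow_zero]
    omega
  by_contra! hlt
  have hcard : Fintype.card H < 2 ^ Multiset.card (V.erase a) := by
    rw [← Multiset.card_erase_add_one ha, pow_succ] at hlt
    omega
  obtain ⟨X, hX, hX0, hφX⟩ := exists_le_sum_eq_zero_of_card_lt hH φ _ hcard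
  have hXV : X < V := hX.trans_lt (Multiset.erase_lt.mpr ha)
  have hXe : X.sum = e :=
    (hker _ hφX).resolve_left (hU.sum_ne_zero (hXV.le.trans hV) hX0 (hXV.trans_le hV).ne)
  have hrest0 : V - X ≠ 0 := fun h => hXV.not_ge (tsub_eq_zero_iff_le.mp h)
  have hrest : (V - X).sum = 0 := by
    have hsum := congrArg Multiset.sum (add_tsub_cancel_of_le hXV.le)
    rwa [Multiset.sum_add, hXe, hVe, add_eq_left] at hsum
  exact hVU (le_antisymm hV
    (hU.eq_of_le_of_sum_eq_zero (tsub_le_self.trans hV) hrest0 hrest ▸ tsub_le_self))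

theorem card_le_two_or_two_pow_card_le (hU : IsMinZeroSumSeq U) (hA : IsMinZeroSumSeq A)
    (hB : IsMinZeroSumSeq B) (hC : IsMinZeroSumSeq C) (hsum : A + B + C = U + U.map fun g => -g)
    (hS : S ≤ U) (hT : T ≤ U) (hAST : A = S + T.map fun g => -g) :
    Multiset.card A ≤ 2 ∨ (S + T).sum = e ∧ 2 ^ Multiset.card A ≤ 2 * Fintype.card H := by
  rcases hA.card_eq_two_or_add_le hAST hS hT with h2 | hle
  · exact Or.inl h2.le
  have hcard : Multiset.card A = Multiset.card (S + T) := by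
    rw [hAST, Multiset.card_add, Multiset.card_add, Multiset.card_map]
  have hTS : S.sum = T.sum := by
    have hA0 := hA.2.1
    rwa [hAST, Multiset.sum_add, Multiset.sum_map_neg', add_neg_eq_zero] at hA0
  have hne : S + T ≠ U := add_ne_of_add_add_eq hA hB hC hsum hAST
  have h0 : S + T ≠ 0 := by
    intro h
    obtain ⟨rfl, rfl⟩ := add_eq_zero.mp h
    exact hA.1 (by simpa using hAST)
  have hφ : φ (S + T).sum = 0 := by rw [Multiset.sum_add, ← hTS, map_add, hH]
  have he : (S + T).sum = e := (hker _ hφ).resolve_left (hU.sum_ne_zero hle h0 hne)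
  exact Or.inr ⟨he, hcard ▸ hU.two_pow_card_le hH φ e hker hle hne he⟩

end KernelOfOrderTwo

end IsMinZeroSumSeq

theorem card_le_two_or_card_le_five {U A B C S T : Multiset ((Fin 3 → ZMod 2) × ZMod 4)}
    (hU : IsMinZeroSumSeq U) (hA : IsMinZeroSumSeq A) (hB : IsMinZeroSumSeq B)
    (hC : IsMinZeroSumSeq C) (hsum : A + B + C = U + U.map fun g => -g)
    (hS : S ≤ U) (hT : T ≤ U) (hAST : A = S + T.map fun g => -g) :
    Multiset.card A ≤ 2 ∨ (S + T).sum = (0, 2) ∧ Multiset.card A ≤ 5 := by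
  let φ : (Fin 3 → ZMod 2) × ZMod 4 →+ (Fin 3 → ZMod 2) × ZMod 2 :=
    (AddMonoidHom.id _).prodMap (ZMod.castHom (show 2 ∣ 4 by norm_num) (ZMod 2)).toAddMonoidHom
  have hker : ∀ g, φ g = 0 → g = 0 ∨ g = (0, 2) := by decide
  rcases hU.card_le_two_or_two_pow_card_le (by decide) φ _ hker hA hB hC hsum hS hT hAST with h | ⟨he, hpow⟩
  · exact Or.inl h
  · refine Or.inr ⟨he, (Nat.pow_le_pow_iff_right one_lt_two).mp ?_⟩
    simpa using hpow

/-- Lemma 5.6: for `G = C₂³ ⊕ C₄` and an atom `U` over `G` of length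
`|U| = D(G) = 7`, one has `3 ∉ L(U·(-U))`. -/
theorem stmt19 (U : Multiset ((Fin 3 → ZMod 2) × ZMod 4))
    (hU : IsMinZeroSumSeq U) (hcard : Multiset.card U = 7) :
    3 ∉ lengthSet (U + U.map (fun g => -g)) := by
  rintro ⟨z, hz3, hzat, hzsum⟩
  obtain ⟨A₁, A₂, A₃, rfl⟩ := Multiset.card_eq_three.mp hz3
  have hsum : A₁ + A₂ + A₃ = U + U.map fun g => -g := by simpa [add_assoc] using hzsum
  obtain ⟨S₁, S₂, S₃, T₁, T₂, T₃, hS, hT, h₁, h₂, h₃⟩ :=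
    Multiset.exists_split_of_add_add_eq_add_map_neg hsum
  have hA₁ := hzat A₁ (by simp)
  have hA₂ := hzat A₂ (by simp)
  have hA₃ := hzat A₃ (by simp)
  have b₁ := card_le_two_or_card_le_five hU hA₁ hA₂ hA₃ hsum
    (hS ▸ le_self_add.trans le_self_add) (hT ▸ le_self_add.trans le_self_add) h₁
  have b₂ := card_le_two_or_card_le_five hU hA₂ hA₁ hA₃ (by rwa [add_comm A₂])
    (hS ▸ le_add_self.trans le_self_add) (hT ▸ le_add_self.trans le_self_add) h₂
  have b₃ := card_le_two_or_card_le_five hU hA₃ hA₁ hA₂ (by rw [← hsum]; abel)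
    (hS ▸ le_add_self) (hT ▸ le_add_self) h₃
  have hd : (S₁ + T₁).sum + (S₂ + T₂).sum + (S₃ + T₃).sum = 0 := by
    calc _ = (S₁ + S₂ + S₃).sum + (T₁ + T₂ + T₃).sum := by simp only [Multiset.sum_add]; abel
      _ = 0 := by rw [← hS, ← hT, hU.2.1, add_zero]
  have hcards : Multiset.card A₁ + Multiset.card A₂ + Multiset.card A₃ = 14 := by
    simpa [hcard] using congrArg Multiset.card hsum
  rcases b₁ with b₁ | ⟨e₁, b₁⟩ <;> rcases b₂ with b₂ | ⟨e₂, b₂⟩ <;>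
    rcases b₃ with b₃ | ⟨e₃, b₃⟩ <;> try omega
  rw [e₁, e₂, e₃] at hd
  exact absurd hd (by decide)
end
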